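/- arXiv:2105.13218 — 2 statements merged into one kernel-verified Lean document; each statement's English description precedes it below -/
import Mathlib

section
/- Let N be a positive integer and let f : EuclideanSpace ℝ (Fin N) → ℝ be a convex function. Suppose g : EuclideanSpace ℝ (Fin N) → EuclideanSpace ℝ (Fin N) is a subgradient selection for f, i.e. for every x and y, f(y) ≥ f(x) + ⟪g(x), y − x⟫, and that the subgradients are uniformly bounded: there is G ≥ 0 with ‖g(x)‖ ≤ G for all x. Let (αₖ) be a diminishing step size sequence: αₖ > 0 for all k, αₖ → 0, and ∑ₖ αₖ = ∞. Define iterates by x₀ arbitrary and x_{k+1} = x_k − αₖ • g(x_k). If f attains its minimum at some point x⋆, then the running best value converges to the optimum: the sequence n ↦ min_{0 ≤ k ≤ n} f(x_k) tends to f(x⋆) as n → ∞. -/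
open scoped RealInnerProductSpace

/-- Convergence of the subgradient method with diminishing step sizes:
the running best value converges to the optimal value. -/
theorem subgradient_method_diminishing_step_converges
    (N : ℕ) (hN : 0 < N)
    (f : EuclideanSpace ℝ (Fin N) → ℝ)
    (hf : ConvexOn ℝ Set.univ f)
    (g : EuclideanSpace ℝ (Fin N) → EuclideanSpace ℝ (Fin N))
    (hg : ∀ x y, f y ≥ f x + ⟪g x, y - x⟫)
    (G : ℝ) (hG : 0 ≤ G) (hgbd : ∀ x, ‖g x‖ ≤ G)
    (α : ℕ → ℝ) (hαpos : ∀ k, 0 < α k)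
    (hα0 : Filter.Tendsto α Filter.atTop (nhds 0))
    (hαdiv : Filter.Tendsto (fun n => ∑ k ∈ Finset.range n, α k)
      Filter.atTop Filter.atTop)
    (x : ℕ → EuclideanSpace ℝ (Fin N))
    (hx : ∀ k, x (k + 1) = x k - α k • g (x k))
    (xstar : EuclideanSpace ℝ (Fin N)) (hmin : ∀ y, f xstar ≤ f y) :
    Filter.Tendsto
      (fun n => (Finset.range (n + 1)).inf'
        (Finset.nonempty_range_iff.mpr (Nat.succ_ne_zero n)) (fun k => f (x k)))
      Filter.atTop (nhds (f xstar)) := by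
  set D : ℕ → ℝ := fun k => ‖x k - xstar‖^2 with hD
  set S : ℕ → ℝ := fun n => ∑ k ∈ Finset.range n, α k with hS
  -- key per-step inequality
  have key : ∀ k, D (k+1) ≤ D k - 2 * α k * (f (x k) - f xstar) + (α k)^2 * G^2 := by
    intro k
    have hx' : x (k+1) - xstar = (x k - xstar) - α k • g (x k) := by
      rw [hx k, sub_right_comm]
    have h1 : ⟪x k - xstar, α k • g (x k)⟫ = α k * ⟪g (x k), x k - xstar⟫ := by
      rw [inner_smul_right, real_inner_comm]
    have h2 : f (x k) - f xstar ≤ ⟪g (x k), x k - xstar⟫ := by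
      have h := hg (x k) xstar
      have hneg : ⟪g (x k), x k - xstar⟫ = - ⟪g (x k), xstar - x k⟫ := by
        rw [← inner_neg_right, neg_sub]
      rw [hneg]; linarith
    have h3 : ‖α k • g (x k)‖^2 ≤ (α k)^2 * G^2 := by
      rw [norm_smul, Real.norm_eq_abs]
      have hgk := hgbd (x k)
      have hgn : (0:ℝ) ≤ ‖g (x k)‖ := norm_nonneg _
      have : (|α k| * ‖g (x k)‖)^2 = (α k)^2 * ‖g (x k)‖^2 := by
        rw [mul_pow, sq_abs]
      rw [this]
      have : ‖g (x k)‖^2 ≤ G^2 := by nlinarith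
      nlinarith [sq_nonneg (α k)]
    have hexp : D (k+1) = D k - 2 * ⟪x k - xstar, α k • g (x k)⟫ + ‖α k • g (x k)‖^2 := by
      show ‖x (k+1) - xstar‖^2 = ‖x k - xstar‖^2 - _ + _
      rw [hx']
      exact norm_sub_sq_real _ _
    rw [hexp, h1]
    have hα := (hαpos k).le
    nlinarith [mul_le_mul_of_nonneg_left h2 (by positivity : (0:ℝ) ≤ 2 * α k)]
  have hDnn : ∀ k, 0 ≤ D k := fun k => sq_nonneg _
  -- claim: values get within ε of optimum
  have claim : ∀ ε > (0:ℝ), ∃ k, f (x k) < f xstar + ε := by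
    intro ε hε
    by_contra hcon
    push_neg at hcon
    -- eventually α k * G^2 ≤ ε
    have htend : Filter.Tendsto (fun k => α k * G^2) Filter.atTop (nhds 0) := by
      simpa using hα0.mul_const (G^2)
    have hev : ∀ᶠ k in Filter.atTop, α k * G^2 < ε :=
      htend.eventually_lt_const hε
    obtain ⟨K, hK⟩ := hev.exists_forall_of_atTop
    -- descent for k ≥ K
    have step : ∀ k ≥ K, D (k+1) ≤ D k - ε * α k := by
      intro k hk
      have h1 := key k
      have h2 := hcon k
      have h3 := hK k hk
      have hα := (hαpos k).le
      nlinarith [mul_le_mul_of_nonneg_left h2 (by positivity : (0:ℝ) ≤ 2 * α k),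
        mul_le_mul_of_nonneg_left (le_of_lt h3) hα]
    -- induction: D (K+m) ≤ D K - ε * (S (K+m) - S K)
    have ind : ∀ m, D (K+m) ≤ D K - ε * (S (K+m) - S K) := by
      intro m
      induction m with
      | zero => simp
      | succ m ih =>
        have h1 := step (K+m) (Nat.le_add_right K m)
        have h2 : S (K+m+1) = S (K+m) + α (K+m) := Finset.sum_range_succ _ _
        have : K + (m+1) = (K+m) + 1 := by ring
        rw [this, h2]
        have hα := (hαpos (K+m)).le
        nlinarith
    -- contradiction with divergence
    obtain ⟨n, hn1, hn2⟩ := ((hαdiv.eventually_ge_atTop ((D K + ε * S K)/ε + 1)).and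
      (Filter.eventually_ge_atTop K)).exists
    have hm : ∃ m, n = K + m := ⟨n - K, by omega⟩
    obtain ⟨m, rfl⟩ := hm
    have h1 := ind m
    have h2 := hDnn (K+m)
    have hSn : S (K+m) ≥ (D K + ε * S K)/ε + 1 := hn1
    have : ε * S (K+m) ≥ D K + ε * S K + ε := by
      have := mul_le_mul_of_nonneg_left hSn (le_of_lt hε)
      rw [mul_add, mul_div_cancel₀ _ (ne_of_gt hε)] at this
      linarith
    linarith
  -- conclude
  rw [Metric.tendsto_atTop]
  intro ε hε
  obtain ⟨k, hk⟩ := claim ε hε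
  refine ⟨k, fun n hn => ?_⟩
  have hmem : k ∈ Finset.range (n+1) := Finset.mem_range.mpr (by omega)
  have hle : (Finset.range (n + 1)).inf'
      (Finset.nonempty_range_iff.mpr (Nat.succ_ne_zero n)) (fun k => f (x k)) ≤ f (x k) :=
    Finset.inf'_le _ hmem
  have hge : f xstar ≤ (Finset.range (n + 1)).inf'
      (Finset.nonempty_range_iff.mpr (Nat.succ_ne_zero n)) (fun k => f (x k)) :=
    Finset.le_inf' _ _ (fun j _ => hmin (x j))
  rw [Real.dist_eq, abs_lt]
  constructor <;> linarith
end

section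
/- Let N be a positive integer and f : EuclideanSpace ℝ (Fin N) → ℝ a convex function attaining its minimum at x⋆. Let g be a subgradient selection for f (for every x, y: f(y) ≥ f(x) + ⟪g(x), y − x⟫) with ‖g(x)‖ ≤ G for all x. For step sizes αₖ > 0, define x_{k+1} = x_k − αₖ • g(x_k). Then for every K ≥ 1, min_{0 ≤ k < K} f(x_k) − f(x⋆) ≤ (‖x₀ − x⋆‖² + G² · ∑_{k=0}^{K−1} αₖ²) / (2 · ∑_{k=0}^{K−1} αₖ). -/
open scoped RealInnerProductSpace

/-- Quantitative error bound for the subgradient method: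
`min_{0 ≤ k < K} f(x_k) - f(x⋆) ≤ (‖x₀ - x⋆‖² + G² ∑ αₖ²) / (2 ∑ αₖ)`. -/
theorem subgradient_method_error_bound
    (N : ℕ) (hN : 0 < N)
    (f : EuclideanSpace ℝ (Fin N) → ℝ)
    (hf : ConvexOn ℝ Set.univ f)
    (xstar : EuclideanSpace ℝ (Fin N)) (hmin : ∀ y, f xstar ≤ f y)
    (g : EuclideanSpace ℝ (Fin N) → EuclideanSpace ℝ (Fin N))
    (hg : ∀ x y, f y ≥ f x + ⟪g x, y - x⟫)
    (G : ℝ) (hgbd : ∀ x, ‖g x‖ ≤ G)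
    (α : ℕ → ℝ) (hαpos : ∀ k, 0 < α k)
    (x : ℕ → EuclideanSpace ℝ (Fin N))
    (hx : ∀ k, x (k + 1) = x k - α k • g (x k))
    (K : ℕ) (hK : 1 ≤ K) :
    (Finset.range K).inf' (Finset.nonempty_range_iff.mpr (by omega))
        (fun k => f (x k)) - f xstar ≤
      (‖x 0 - xstar‖ ^ 2 + G ^ 2 * ∑ k ∈ Finset.range K, (α k) ^ 2) /
        (2 * ∑ k ∈ Finset.range K, α k) := by
  have hG : 0 ≤ G := le_trans (norm_nonneg _) (hgbd (x 0))
  -- one-step bound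
  have step : ∀ k, ‖x (k+1) - xstar‖ ^ 2 ≤
      ‖x k - xstar‖ ^ 2 - 2 * α k * (f (x k) - f xstar) + α k ^ 2 * G ^ 2 := by
    intro k
    have hsub : f (x k) - f xstar ≤ ⟪g (x k), x k - xstar⟫ := by
      have := hg (x k) xstar
      have hinner : ⟪g (x k), xstar - x k⟫ = - ⟪g (x k), x k - xstar⟫ := by
        rw [← inner_neg_right]; congr 1; abel
      rw [hinner] at this; linarith
    have hexp : x (k+1) - xstar = (x k - xstar) - α k • g (x k) := by
      rw [hx k]; abel
    have hnorm : ‖x (k+1) - xstar‖ ^ 2 =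
        ‖x k - xstar‖ ^ 2 - 2 * (α k * ⟪g (x k), x k - xstar⟫) + α k ^ 2 * ‖g (x k)‖ ^ 2 := by
      rw [hexp, norm_sub_sq_real, norm_smul, real_inner_smul_right,
        real_inner_comm]
      simp [mul_pow, abs_of_pos (hαpos k)]
    have hgsq : ‖g (x k)‖ ^ 2 ≤ G ^ 2 :=
      pow_le_pow_left₀ (norm_nonneg _) (hgbd (x k)) 2
    have hα : 0 < α k := hαpos k
    nlinarith [sq_nonneg (α k)]
  -- summed bound
  have main : ∀ M, ‖x M - xstar‖ ^ 2 +
      ∑ k ∈ Finset.range M, 2 * α k * (f (x k) - f xstar) ≤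
      ‖x 0 - xstar‖ ^ 2 + G ^ 2 * ∑ k ∈ Finset.range M, (α k) ^ 2 := by
    intro M
    induction M with
    | zero => simp
    | succ n ih =>
      rw [Finset.sum_range_succ, Finset.sum_range_succ]
      have := step n
      nlinarith
  set m := (Finset.range K).inf' (Finset.nonempty_range_iff.mpr (by omega))
      (fun k => f (x k)) with hm
  have hSpos : 0 < ∑ k ∈ Finset.range K, α k := by
    apply Finset.sum_pos (fun k _ => hαpos k)
    exact Finset.nonempty_range_iff.mpr (by omega)
  have hmono : (m - f xstar) * (2 * ∑ k ∈ Finset.range K, α k) ≤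
      ∑ k ∈ Finset.range K, 2 * α k * (f (x k) - f xstar) := by
    rw [Finset.mul_sum, Finset.mul_sum]
    apply Finset.sum_le_sum
    intro k hk
    have hmk : m ≤ f (x k) := by
      exact Finset.inf'_le _ hk
    have := hαpos k
    nlinarith
  have hnn : 0 ≤ ‖x K - xstar‖ ^ 2 := sq_nonneg _
  have hM := main K
  have key : (m - f xstar) * (2 * ∑ k ∈ Finset.range K, α k) ≤
      ‖x 0 - xstar‖ ^ 2 + G ^ 2 * ∑ k ∈ Finset.range K, (α k) ^ 2 := by linarith
  have h2S : 0 < 2 * ∑ k ∈ Finset.range K, α k := by linarith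
  rw [le_div_iff₀ h2S]
  linarith
end
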